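/- In the free graded Lie algebra over Z_(p) on generators w₁, w₂, w₃, w₄, w₅ and {x_v} (with the differential ∂ whose only nonzero values on generators are ∂(w₄) = [w₂,w₂] and ∂(w₅) = [w₃,w₃]), any cycle of the form c₁[x_v,[x_u,[x_t,[w₂,w₁]]]] with c₁ ≠ 0 is not a boundary, since its expansion in the tensor algebra contains no word with two occurrences of w₂ or two occurrences of w₃. -/

import Mathlib

namespace Stmt14

variable {V : Type}

/-- Generators: `Sum.inl i` is `wᵢ₊₁` (`i = 0,…,4`), `Sum.inr v` is `x_v`. -/
noncomputable def w (i : Fin 5) : FreeAlgebra ℚ (Fin 5 ⊕ V) :=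
  FreeAlgebra.ι ℚ (Sum.inl i)

noncomputable def x (v : V) : FreeAlgebra ℚ (Fin 5 ⊕ V) :=
  FreeAlgebra.ι ℚ (Sum.inr v)

/-- The span of all words containing `w₂²` or `w₃²` as a factor: this contains the image
of the differential `∂` with `∂w₄ = [w₂,w₂] = 2w₂²`, `∂w₅ = [w₃,w₃] = 2w₃²` and
`∂ = 0` on the other generators. -/
noncomputable def boundarySpan (V : Type) : Submodule ℚ (FreeAlgebra ℚ (Fin 5 ⊕ V)) :=
  Submodule.span ℚ
    {y | ∃ b c : FreeAlgebra ℚ (Fin 5 ⊕ V),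
      y = b * (w 1) ^ 2 * c ∨ y = b * (w 2) ^ 2 * c}

/-- The graded Lie element `[x_v,[x_u,[x_t,[w₂,w₁]]]]` expanded in the tensor algebra:
`w₁, w₂` are of odd degree, so `[w₂,w₁] = w₂w₁ + w₁w₂`, while the outer brackets with the
even-degree generators `x_v, x_u, x_t` are commutators. -/
noncomputable def theCycle (v u t : V) : FreeAlgebra ℚ (Fin 5 ⊕ V) :=
  let inner := w 1 * w 0 + w 0 * w 1
  let e₂ := x t * inner - inner * x t
  let e₁ := x u * e₂ - e₂ * x u
  x v * e₁ - e₁ * x v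

/-! Every boundary lies in the two-sided ideal generated by `w₂²` and `w₃²`, so it is killed by
any representation of the tensor algebra in which `w₂` and `w₃` square to zero. In `3 × 3`
matrices, send `w₂ ↦ E₁₂`, `w₁ ↦ E₂₃`, every `x_v ↦ E₃₃` and the remaining generators to `0`:
then `[w₂,w₁] ↦ E₁₃`, each bracket with an `x` changes its sign, and the cycle maps to `-E₁₃ ≠ 0`.
(Matrix indices are `0`-based in the code: `E₁₂` is `E 0 1`.) -/

theorem boundarySpan_le_ker {A : Type*} [Semiring A] [Algebra ℚ A]
    (f : FreeAlgebra ℚ (Fin 5 ⊕ V) →ₐ[ℚ] A) (h₂ : f (w 1) ^ 2 = 0) (h₃ : f (w 2) ^ 2 = 0) :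
    boundarySpan V ≤ LinearMap.ker f.toLinearMap := by
  refine Submodule.span_le.mpr ?_
  rintro _ ⟨b, c, rfl | rfl⟩ <;> simp [h₂, h₃]

local notation "E" i:max j:max => Matrix.single (i : Fin 3) (j : Fin 3) (1 : ℚ)

noncomputable def rep : FreeAlgebra ℚ (Fin 5 ⊕ V) →ₐ[ℚ] Matrix (Fin 3) (Fin 3) ℚ :=
  FreeAlgebra.lift ℚ <|
    Sum.elim (fun i => if i = 0 then E 1 2 else if i = 1 then E 0 1 else 0) fun _ => E 2 2

theorem rep_w_zero : rep (V := V) (w 0) = E 1 2 := by simp [rep, w]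

theorem rep_w_one : rep (V := V) (w 1) = E 0 1 := by simp [rep, w]

theorem rep_w_two : rep (V := V) (w 2) = 0 := by simp [rep, w]

theorem rep_x (v : V) : rep (x v) = E 2 2 := by simp [rep, x]

theorem rep_theCycle (v u t : V) : rep (theCycle v u t) = -E 0 2 := by
  simp [theCycle, rep_w_zero, rep_w_one, rep_x, Matrix.single_mul_single_same,
    Matrix.single_mul_single_of_ne]

/-- Any nonzero multiple `c₁·[x_v,[x_u,[x_t,[w₂,w₁]]]]` is not a boundary: its expansion
in the tensor algebra contains no word with two occurrences of `w₂` or of `w₃`, while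
every boundary lies in the span of words containing `w₂²` or `w₃²`. -/
theorem stmt_14 (v u t : V) (c₁ : ℚ) (hc₁ : c₁ ≠ 0)
    (d : FreeAlgebra ℚ (Fin 5 ⊕ V) →ₗ[ℚ] FreeAlgebra ℚ (Fin 5 ⊕ V))
    (hd : ∀ a, d a ∈ boundarySpan V) :
    ∀ z, d z ≠ c₁ • theCycle v u t := by
  intro z h
  have hker := boundarySpan_le_ker rep (by simp [rep_w_one, sq, Matrix.single_mul_single_of_ne])
    (by simp [rep_w_two]) (hd z)
  rw [h, LinearMap.mem_ker, AlgHom.toLinearMap_apply, map_smul, rep_theCycle] at hker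
  simpa [hc₁] using congrFun (congrFun hker 0) 2

end Stmt14
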